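/- arXiv:1201.1411 — 2 statements merged into one kernel-verified Lean document; each statement's English description precedes it below -/
import Mathlib

section
/- For n ≥ 3, the number λ⁺_{n,2} of n×n binary matrices with exactly two 1's in each row and column and a 1 in the bottom-right entry satisfies λ⁺_{n,2} = 2(n-1)·λ_{n-1,2} + (n-1)²·λ_{n-2,2}, where λ_{m,2} is the number of m×m binary matrices with exactly two 1's in each row and column. -/
def isLambda (n k : ℕ) (A : Fin n → Fin n → Bool) : Prop :=
  (∀ i : Fin n, (Finset.univ.filter fun j => A i j = true).card = k) ∧
  (∀ j : Fin n, (Finset.univ.filter fun i => A i j = true).card = k)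

noncomputable def lam (n k : ℕ) : ℕ :=
  Nat.card {A : Fin n → Fin n → Bool // isLambda n k A}

def lastIdx (n : ℕ) (h : 0 < n) : Fin n := ⟨n - 1, Nat.sub_lt h one_pos⟩

noncomputable def lamPos (n k : ℕ) (h : 0 < n) : ℕ :=
  Nat.card {A : Fin n → Fin n → Bool //
    isLambda n k A ∧ A (lastIdx n h) (lastIdx n h) = true}

noncomputable def lamNeg (n k : ℕ) (h : 0 < n) : ℕ :=
  Nat.card {A : Fin n → Fin n → Bool //
    isLambda n k A ∧ A (lastIdx n h) (lastIdx n h) = false}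

/-!
Deleting the last row and column of a matrix counted by `λ⁺_{n,2}` leaves an `(n-1)×(n-1)`
matrix with two ones in every row and column, except for one row `i₀` and one column `j₀` (where
the last column and last row have their second one), which have a single one. If its entry
`(i₀, j₀)` is `0`, setting it to `1` gives a matrix counted by `λ_{n-1,2}` together with one of
its `2(n-1)` ones; if it is `1`, it is alone in its row and column, and deleting both leaves a
matrix counted by `λ_{n-2,2}`. Summing over the `(n-1)²` choices of `(i₀, j₀)` gives the
recurrence.
-/

open Finset

section Counting

variable {α : Type*} [Fintype α]

lemma exists_forall_iff_eq_of_card_filter_eq_one {p : α → Prop} [DecidablePred p]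
    (h : #{x | p x} = 1) : ∃ a, ∀ x, p x ↔ x = a := by
  obtain ⟨a, ha⟩ := card_eq_one.1 h
  exact ⟨a, fun x => by simpa using Finset.ext_iff.1 ha x⟩

lemma forall_iff_eq_of_card_filter_eq_one {p : α → Prop} [DecidablePred p] {a : α}
    (h : #{x | p x} = 1) (ha : p a) : ∀ x, p x ↔ x = a := by
  obtain ⟨b, hb⟩ := exists_forall_iff_eq_of_card_filter_eq_one h
  obtain rfl := (hb a).1 ha
  exact hb

lemma Nat.card_subtype_eq_card_and_add_card_and_not (p q : α → Prop) [DecidablePred p]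
    [DecidablePred q] :
    Nat.card {a // p a} = Nat.card {a // p a ∧ q a} + Nat.card {a // p a ∧ ¬q a} := by
  simp only [Nat.card_eq_fintype_card, Fintype.card_subtype, ← filter_filter,
    card_filter_add_card_filter_not]

end Counting

namespace Fin

variable {n : ℕ}

lemma card_filter_univ_castSucc (p : Fin (n + 1) → Prop) [DecidablePred p] :
    #{x | p x} = #{x : Fin n | p x.castSucc} + if p (last n) then 1 else 0 := by
  simp only [card_filter, sum_univ_castSucc]

lemma card_filter_univ_succAbove (p : Fin (n + 1) → Prop) [DecidablePred p] (y : Fin (n + 1)) :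
    #{x | p x} = (if p y then 1 else 0) + #{x : Fin n | p (y.succAbove x)} := by
  simp only [card_filter, sum_univ_succAbove _ y]

end Fin

variable {n : ℕ}

def IsTwoRegularExcept (i₀ j₀ : Fin n) (M : Fin n → Fin n → Bool) : Prop :=
  (∀ i, #{j | M i j = true} = if i = i₀ then 1 else 2) ∧
  (∀ j, #{i | M i j = true} = if j = j₀ then 1 else 2)

section Border

def border (i₀ j₀ : Fin n) (M : Fin n → Fin n → Bool) : Fin (n + 1) → Fin (n + 1) → Bool :=
  Fin.lastCases (Fin.lastCases true fun j => decide (j = j₀))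
    fun i => Fin.lastCases (decide (i = i₀)) (M i)

variable (i₀ j₀ : Fin n) (M : Fin n → Fin n → Bool)

@[simp] lemma border_last_last : border i₀ j₀ M (.last n) (.last n) = true := by
  simp [border]

@[simp] lemma border_last_castSucc (j : Fin n) :
    border i₀ j₀ M (.last n) j.castSucc = decide (j = j₀) := by
  simp [border]

@[simp] lemma border_castSucc_last (i : Fin n) :
    border i₀ j₀ M i.castSucc (.last n) = decide (i = i₀) := by
  simp [border]

@[simp] lemma border_castSucc_castSucc (i j : Fin n) :
    border i₀ j₀ M i.castSucc j.castSucc = M i j := by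
  simp [border]

lemma isLambda_border_iff : isLambda (n + 1) 2 (border i₀ j₀ M) ↔ IsTwoRegularExcept i₀ j₀ M := by
  simp only [isLambda, IsTwoRegularExcept, Fin.forall_fin_succ', Fin.card_filter_univ_castSucc,
    border_castSucc_castSucc, border_castSucc_last, border_last_castSucc, border_last_last,
    decide_eq_true_eq, filter_eq', mem_univ, if_true, card_singleton, and_true]
  refine and_congr (forall_congr' fun i => ?_) (forall_congr' fun j => ?_) <;> split_ifs <;> omega

variable {i₀ j₀ M} in
lemma border_inj {i₁ j₁ : Fin n} {M₁ : Fin n → Fin n → Bool}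
    (h : border i₀ j₀ M = border i₁ j₁ M₁) : i₀ = i₁ ∧ j₀ = j₁ ∧ M = M₁ := by
  refine ⟨?_, ?_, funext fun i => funext fun j => ?_⟩
  · simpa using congr_fun (congr_fun h i₀.castSucc) (.last n)
  · simpa using congr_fun (congr_fun h (.last n)) j₀.castSucc
  · simpa using congr_fun (congr_fun h i.castSucc) j.castSucc

end Border

lemma exists_eq_border {A : Fin (n + 1) → Fin (n + 1) → Bool} (hA : isLambda (n + 1) 2 A)
    (hlast : A (.last n) (.last n) = true) : ∃ i₀ j₀ M, A = border i₀ j₀ M := by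
  have hrow := hA.1 (.last n)
  have hcol := hA.2 (.last n)
  rw [Fin.card_filter_univ_castSucc, if_pos hlast] at hrow hcol
  obtain ⟨j₀, hj₀⟩ := exists_forall_iff_eq_of_card_filter_eq_one (Nat.add_right_cancel hrow)
  obtain ⟨i₀, hi₀⟩ := exists_forall_iff_eq_of_card_filter_eq_one (Nat.add_right_cancel hcol)
  refine ⟨i₀, j₀, fun i j => A i.castSucc j.castSucc, funext fun i => funext fun j => ?_⟩
  induction i using Fin.lastCases <;> induction j using Fin.lastCases
  · simpa using hlast
  · rw [border_last_castSucc, Bool.eq_iff_iff, decide_eq_true_eq]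
    exact hj₀ _
  · rw [border_castSucc_last, Bool.eq_iff_iff, decide_eq_true_eq]
    exact hi₀ _
  · simp

lemma card_lamPos_eq_sum :
    Nat.card {A : Fin (n + 1) → Fin (n + 1) → Bool //
      isLambda (n + 1) 2 A ∧ A (.last n) (.last n) = true} =
    ∑ e : Fin n × Fin n, Nat.card {M // IsTwoRegularExcept e.1 e.2 M} := by
  rw [← Nat.card_sigma]
  symm
  refine Nat.card_congr (.ofBijective
    (fun M => ⟨border M.1.1 M.1.2 M.2, (isLambda_border_iff _ _ _).2 M.2.2, border_last_last ..⟩)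
    ⟨fun ⟨⟨i₀, j₀⟩, M, _⟩ ⟨⟨i₁, j₁⟩, M₁, _⟩ h => ?_, fun ⟨A, hA, hlast⟩ => ?_⟩)
  · obtain ⟨rfl, rfl, rfl⟩ := border_inj (congrArg Subtype.val h)
    rfl
  · obtain ⟨i₀, j₀, M, rfl⟩ := exists_eq_border hA hlast
    exact ⟨⟨(i₀, j₀), M, (isLambda_border_iff _ _ _).1 hA⟩, rfl⟩

section WithEntry

def withEntry (i₀ j₀ : Fin n) (b : Bool) (M : Fin n → Fin n → Bool) : Fin n → Fin n → Bool :=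
  fun i j => if i = i₀ ∧ j = j₀ then b else M i j

variable {i₀ j₀ : Fin n} {M : Fin n → Fin n → Bool}

@[simp] lemma withEntry_apply_self (b : Bool) : withEntry i₀ j₀ b M i₀ j₀ = b := by
  simp [withEntry]

@[simp] lemma withEntry_withEntry (b b' : Bool) :
    withEntry i₀ j₀ b (withEntry i₀ j₀ b' M) = withEntry i₀ j₀ b M := by
  funext i j
  simp only [withEntry]
  split_ifs <;> rfl

lemma withEntry_eq_self {b : Bool} (h : M i₀ j₀ = b) : withEntry i₀ j₀ b M = M := by
  funext i j
  simp only [withEntry]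
  split_ifs with hij
  · rw [hij.1, hij.2, h]
  · rfl

lemma card_row_withEntry_true (h : M i₀ j₀ = false) (i : Fin n) :
    #{j | withEntry i₀ j₀ true M i j = true} = #{j | M i j = true} + if i = i₀ then 1 else 0 := by
  split_ifs with hi
  · subst hi
    rw [← card_insert_of_notMem (s := {j | M i j = true}) (a := j₀) (by simp [h])]
    congr 1
    ext j
    by_cases hj : j = j₀ <;> simp [withEntry, hj]
  · simp [withEntry, hi]

lemma card_col_withEntry_true (h : M i₀ j₀ = false) (j : Fin n) :
    #{i | withEntry i₀ j₀ true M i j = true} = #{i | M i j = true} + if j = j₀ then 1 else 0 := by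
  split_ifs with hj
  · subst hj
    rw [← card_insert_of_notMem (s := {i | M i j = true}) (a := i₀) (by simp [h])]
    congr 1
    ext i
    by_cases hi : i = i₀ <;> simp [withEntry, hi]
  · simp [withEntry, hj]

lemma isLambda_withEntry_true_iff (h : M i₀ j₀ = false) :
    isLambda n 2 (withEntry i₀ j₀ true M) ↔ IsTwoRegularExcept i₀ j₀ M := by
  simp only [isLambda, IsTwoRegularExcept, card_row_withEntry_true h, card_col_withEntry_true h]
  refine and_congr (forall_congr' fun i => ?_) (forall_congr' fun j => ?_) <;> split_ifs <;> omega

variable (i₀ j₀) in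
def withEntryEquiv :
    {M // IsTwoRegularExcept i₀ j₀ M ∧ M i₀ j₀ = false} ≃
      {B // isLambda n 2 B ∧ B i₀ j₀ = true} where
  toFun M := ⟨withEntry i₀ j₀ true M, (isLambda_withEntry_true_iff M.2.2).2 M.2.1,
    withEntry_apply_self _⟩
  invFun B := ⟨withEntry i₀ j₀ false B, (isLambda_withEntry_true_iff (withEntry_apply_self _)).1
    (by rw [withEntry_withEntry, withEntry_eq_self B.2.2]; exact B.2.1), withEntry_apply_self _⟩
  left_inv M := Subtype.ext <| by simp only [withEntry_withEntry, withEntry_eq_self M.2.2]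
  right_inv B := Subtype.ext <| by simp only [withEntry_withEntry, withEntry_eq_self B.2.2]

end WithEntry

section InsertCross

def insertCross (i₀ j₀ : Fin (n + 1)) (C : Fin n → Fin n → Bool) :
    Fin (n + 1) → Fin (n + 1) → Bool :=
  i₀.insertNth (fun j => decide (j = j₀)) fun r => j₀.insertNth false (C r)

variable (i₀ j₀ : Fin (n + 1)) (C : Fin n → Fin n → Bool)

@[simp] lemma insertCross_self (j : Fin (n + 1)) :
    insertCross i₀ j₀ C i₀ j = decide (j = j₀) := by
  simp [insertCross]

@[simp] lemma insertCross_succAbove_self (r : Fin n) :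
    insertCross i₀ j₀ C (i₀.succAbove r) j₀ = false := by
  simp [insertCross]

@[simp] lemma insertCross_succAbove_succAbove (r c : Fin n) :
    insertCross i₀ j₀ C (i₀.succAbove r) (j₀.succAbove c) = C r c := by
  simp [insertCross]

lemma isTwoRegularExcept_insertCross_iff :
    IsTwoRegularExcept i₀ j₀ (insertCross i₀ j₀ C) ↔ isLambda n 2 C := by
  refine and_congr ?_ ?_
  · rw [Fin.forall_iff_succAbove i₀]
    simp [Fin.card_filter_univ_succAbove _ j₀, Fin.succAbove_ne]
  · rw [Fin.forall_iff_succAbove j₀]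
    simp [Fin.card_filter_univ_succAbove _ i₀, Fin.succAbove_ne]

variable {i₀ j₀} in
lemma insertCross_minor {M : Fin (n + 1) → Fin (n + 1) → Bool}
    (hM : IsTwoRegularExcept i₀ j₀ M) (h : M i₀ j₀ = true) :
    insertCross i₀ j₀ (fun r c => M (i₀.succAbove r) (j₀.succAbove c)) = M := by
  have hrow := forall_iff_eq_of_card_filter_eq_one (p := (M i₀ · = true))
    (by simpa using hM.1 i₀) h
  have hcol := forall_iff_eq_of_card_filter_eq_one (p := (M · j₀ = true))
    (by simpa using hM.2 j₀) h
  funext i j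
  induction i using Fin.succAboveCases i₀ <;> induction j using Fin.succAboveCases j₀
  · simpa using h.symm
  · rw [insertCross_self, Bool.eq_iff_iff, decide_eq_true_eq, hrow]
  · rw [insertCross_succAbove_self, eq_comm, Bool.eq_false_iff, ne_eq, hcol]
    exact Fin.succAbove_ne _ _
  · rw [insertCross_succAbove_succAbove]

def insertCrossEquiv :
    {C // isLambda n 2 C} ≃ {M // IsTwoRegularExcept i₀ j₀ M ∧ M i₀ j₀ = true} where
  toFun C := ⟨insertCross i₀ j₀ C, (isTwoRegularExcept_insertCross_iff _ _ _).2 C.2, by simp⟩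
  invFun M := ⟨fun r c => M.1 (i₀.succAbove r) (j₀.succAbove c), by
    rw [← isTwoRegularExcept_insertCross_iff i₀ j₀, insertCross_minor M.2.1 M.2.2]; exact M.2.1⟩
  left_inv C := Subtype.ext <| by simp
  right_inv M := Subtype.ext <| insertCross_minor M.2.1 M.2.2

end InsertCross

lemma card_isTwoRegularExcept (i₀ j₀ : Fin (n + 1)) :
    Nat.card {M // IsTwoRegularExcept i₀ j₀ M} =
      Nat.card {B // isLambda (n + 1) 2 B ∧ B i₀ j₀ = true} + lam n 2 := by
  classical
  rw [Nat.card_subtype_eq_card_and_add_card_and_not _ (fun M => M i₀ j₀ = false),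
    Nat.card_congr (withEntryEquiv i₀ j₀)]
  simp only [Bool.not_eq_false]
  rw [← Nat.card_congr (insertCrossEquiv i₀ j₀), lam]

lemma card_filter_apply_of_isLambda {k : ℕ} {A : Fin n → Fin n → Bool} (hA : isLambda n k A) :
    #{e : Fin n × Fin n | A e.1 e.2 = true} = n * k := by
  rw [card_filter, Fintype.sum_prod_type]
  simp [hA.1]

lemma sum_card_isLambda_apply (k : ℕ) :
    ∑ e : Fin n × Fin n, Nat.card {B // isLambda n k B ∧ B e.1 e.2 = true} = n * k * lam n k := by
  classical
  simp only [lam, Nat.card_eq_fintype_card, Fintype.card_subtype]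
  rw [card_eq_sum_ones {B | isLambda n k B}, mul_sum]
  simp only [← filter_filter (isLambda n k), card_filter]
  rw [sum_comm]
  refine sum_congr rfl fun B hB => ?_
  rw [mul_one, ← card_filter_apply_of_isLambda (mem_filter.1 hB).2, card_filter]

/-- λ⁺_{n,2} = 2(n−1)λ_{n−1,2} + (n−1)²λ_{n−2,2} for n ≥ 3. -/
theorem lamPos_two_rec (n : ℕ) (hn : 3 ≤ n) (h : 0 < n) :
    lamPos n 2 h = 2 * (n - 1) * lam (n - 1) 2 + (n - 1) ^ 2 * lam (n - 2) 2 := by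
  obtain ⟨m, rfl⟩ : ∃ m, n = m + 2 := ⟨n - 2, by omega⟩
  calc lamPos (m + 2) 2 h
      = ∑ e : Fin (m + 1) × Fin (m + 1), Nat.card {M // IsTwoRegularExcept e.1 e.2 M} :=
        card_lamPos_eq_sum
    _ = ∑ e : Fin (m + 1) × Fin (m + 1),
          (Nat.card {B // isLambda (m + 1) 2 B ∧ B e.1 e.2 = true} + lam m 2) := by
        simp only [card_isTwoRegularExcept]
    _ = 2 * (m + 2 - 1) * lam (m + 2 - 1) 2 + (m + 2 - 1) ^ 2 * lam (m + 2 - 2) 2 := by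
        rw [sum_add_distrib, sum_card_isLambda_apply, sum_const, card_univ, Fintype.card_prod,
          Fintype.card_fin, smul_eq_mul, show m + 2 - 1 = m + 1 by omega, Nat.add_sub_cancel]
        ring
end

section
/- For n ≥ 4, the number λ⁺_{n,3} of n×n binary matrices with exactly three 1's in each row and column and with a 1 in the bottom-right entry satisfies 2·λ⁺_{n,3} = 3(n-1)(3n-8)·λ_{n-1,3} + 2·(αₙ + βₙ + 2γₙ - ηₙ), where λ_{n-1,3} counts (n-1)×(n-1) binary matrices with exactly three 1's per row and column, and αₙ, βₙ, γₙ, ηₙ count the matrices in Λₙ³⁺ whose associated 2×2 submatrix X̃ has respectively four 1's, three 1's, a single column of 1's, and no 1's. -/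
/-- `tildePattern n h X P` holds when the 2×2 submatrix X̃ of `X` (formed by the rows
`s < t` of the other two 1's of the last column and the columns `p < q` of the other
two 1's of the last row) satisfies `P (X s p) (X s q) (X t p) (X t q)`. -/
def tildePattern (n : ℕ) (h : 0 < n) (X : Fin n → Fin n → Bool)
    (P : Bool → Bool → Bool → Bool → Prop) : Prop :=
  ∃ s t p q : Fin n, s < t ∧ p < q ∧
    s ≠ lastIdx n h ∧ t ≠ lastIdx n h ∧ p ≠ lastIdx n h ∧ q ≠ lastIdx n h ∧
    X s (lastIdx n h) = true ∧ X t (lastIdx n h) = true ∧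
    X (lastIdx n h) p = true ∧ X (lastIdx n h) q = true ∧
    P (X s p) (X s q) (X t p) (X t q)

/-- X̃ is a full column of 1's:  [[1,0],[1,0]] or [[0,1],[0,1]]. -/
def patΓ (a b c d : Bool) : Prop :=
  (a = true ∧ c = true ∧ b = false ∧ d = false) ∨
  (b = true ∧ d = true ∧ a = false ∧ c = false)

/-- X̃ is a full row of 1's:  [[1,1],[0,0]] or [[0,0],[1,1]]. -/
def patΔ (a b c d : Bool) : Prop :=
  (a = true ∧ b = true ∧ c = false ∧ d = false) ∨
  (c = true ∧ d = true ∧ a = false ∧ b = false)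

/-- X̃ is a diagonal:  [[1,0],[0,1]] or [[0,1],[1,0]]. -/
def patE (a b c d : Bool) : Prop :=
  (a = true ∧ d = true ∧ b = false ∧ c = false) ∨
  (b = true ∧ c = true ∧ a = false ∧ d = false)

/-- X̃ is all ones. -/
def patA (a b c d : Bool) : Prop := a = true ∧ b = true ∧ c = true ∧ d = true

/-- X̃ has exactly three 1's. -/
def patB (a b c d : Bool) : Prop := a.toNat + b.toNat + c.toNat + d.toNat = 3

/-- X̃ has exactly one 1. -/
def patZ (a b c d : Bool) : Prop := a.toNat + b.toNat + c.toNat + d.toNat = 1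

/-- X̃ is all zeros. -/
def patH (a b c d : Bool) : Prop := a = false ∧ b = false ∧ c = false ∧ d = false

/-!
Write `n = m + 1`. For `Y ∈ Λ_{m,3}` and two ones `e, e'` of `Y` in distinct rows and columns,
`extend Y e e'` moves these two ones into a new last column and a new last row and puts a one in
the new corner; the result lies in `Λ⁺_{m+1,3}`. Conversely, `X ∈ Λ⁺_{m+1,3}` arises in this way
exactly from the pairs `(e, e')` that match the rows `s, t` of `X̃` with its columns `p, q` along
a diagonal on which `X` vanishes, in either order: `2 z` pairs, `z` the number of zero diagonals
of `X̃`. As `Y` has `3m(3m - 5)` ordered pairs of such ones, `∑_X 2 z = 3m(3m - 5) λ_{m,3}`.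
Inspecting the sixteen `2 × 2` patterns gives `1 + [X̃ = 0] = [α] + [β] + [γ] + [δ] + z`, where
`δ` counts the full-row patterns, and transposition shows that `δ = γ`. Summing over `Λ⁺_{m+1,3}`
gives the recurrence.
-/

open Finset

namespace Lam

instance (n k : ℕ) : DecidablePred (isLambda n k) := fun _ => by
  unfold isLambda; infer_instance

instance (a b c d : Bool) : Decidable (patA a b c d) := by unfold patA; infer_instance
instance (a b c d : Bool) : Decidable (patB a b c d) := by unfold patB; infer_instance
instance (a b c d : Bool) : Decidable (patΓ a b c d) := by unfold patΓ; infer_instance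
instance (a b c d : Bool) : Decidable (patΔ a b c d) := by unfold patΔ; infer_instance
instance (a b c d : Bool) : Decidable (patH a b c d) := by unfold patH; infer_instance

instance (n : ℕ) (h : 0 < n) (X : Fin n → Fin n → Bool)
    (P : Bool → Bool → Bool → Bool → Prop) [∀ a b c d, Decidable (P a b c d)] :
    Decidable (tildePattern n h X P) := by
  unfold tildePattern; infer_instance

variable {m : ℕ}

theorem card_filter_fin_succ (f : Fin (m + 1) → Bool) :
    #{j | f j = true} = #{j : Fin m | f j.castSucc = true} + (f (Fin.last m)).toNat := by
  simp only [card_filter, Fin.sum_univ_castSucc]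
  cases f (Fin.last m) <;> rfl

theorem card_filter_eq_sum_toNat {ι : Type*} [Fintype ι] (f : ι → Bool) :
    #{i | f i = true} = ∑ i, (f i).toNat := by
  rw [card_filter]
  congr 1; funext i
  cases f i <;> rfl

theorem card_filter_castSucc_eq_two {f : Fin (m + 1) → Bool} (hf : #{j | f j = true} = 3)
    (hlast : f (Fin.last m) = true) : #{j : Fin m | f j.castSucc = true} = 2 := by
  rw [card_filter_fin_succ, hlast] at hf
  simpa using hf

theorem castSucc_eq_true_iff {f : Fin (m + 1) → Bool} (hf : #{j | f j = true} = 3)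
    (hlast : f (Fin.last m) = true) {a b : Fin m} (ha : f a.castSucc = true)
    (hb : f b.castSucc = true) (hab : a ≠ b) (i : Fin m) :
    f i.castSucc = true ↔ i = a ∨ i = b := by
  have hsub : ({a, b} : Finset (Fin m)) ⊆ ({j | f j.castSucc = true} : Finset (Fin m)) := by
    simp [insert_subset_iff, ha, hb]
  have heq := eq_of_subset_of_card_le hsub
    (by rw [card_filter_castSucc_eq_two hf hlast, card_pair hab])
  simpa using (Finset.ext_iff.mp heq i).symm

theorem exists_castSucc_eq_true_iff {f : Fin (m + 1) → Bool} (hf : #{j | f j = true} = 3)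
    (hlast : f (Fin.last m) = true) :
    ∃ a b : Fin m, a < b ∧ ∀ i, f i.castSucc = true ↔ i = a ∨ i = b := by
  obtain ⟨a, b, hab, hset⟩ := card_eq_two.mp (card_filter_castSucc_eq_two hf hlast)
  have ha : f a.castSucc = true := by simpa using (Finset.ext_iff.mp hset a).2 (by simp)
  have hb : f b.castSucc = true := by simpa using (Finset.ext_iff.mp hset b).2 (by simp)
  rcases hab.lt_or_gt with hlt | hlt
  · exact ⟨a, b, hlt, castSucc_eq_true_iff hf hlast ha hb hab⟩
  · exact ⟨b, a, hlt, castSucc_eq_true_iff hf hlast hb ha hab.symm⟩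

def lamFinset (m k : ℕ) : Finset (Fin m → Fin m → Bool) := {Y | isLambda m k Y}

def lamPosFinset (m k : ℕ) : Finset (Fin (m + 1) → Fin (m + 1) → Bool) :=
  {X | isLambda (m + 1) k X ∧ X (Fin.last m) (Fin.last m) = true}

theorem lastIdx_succ (h : 0 < m + 1) : lastIdx (m + 1) h = Fin.last m := rfl

theorem lam_eq_card (m k : ℕ) : lam m k = #(lamFinset m k) := by
  rw [lam, Nat.card_eq_fintype_card, Fintype.card_subtype, lamFinset]

theorem lamPos_eq_card (m k : ℕ) (h : 0 < m + 1) :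
    lamPos (m + 1) k h = #(lamPosFinset m k) := by
  rw [lamPos, Nat.card_eq_fintype_card, Fintype.card_subtype, lamPosFinset]
  rfl

theorem ncard_tildePattern_eq_card (m k : ℕ) (h : 0 < m + 1)
    (P : Bool → Bool → Bool → Bool → Prop) [∀ a b c d, Decidable (P a b c d)] :
    {X | isLambda (m + 1) k X ∧ X (lastIdx (m + 1) h) (lastIdx (m + 1) h) = true ∧
      tildePattern (m + 1) h X P}.ncard =
      #{X ∈ lamPosFinset m k | tildePattern (m + 1) h X P} := by
  rw [← Set.ncard_coe_finset]
  congr 1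
  ext X
  simp [lamPosFinset, and_assoc, lastIdx_succ]

theorem pair_eq_of_lt {α : Type*} [LinearOrder α] {a b s t : α} (hab : a < b) (hst : s < t)
    (ha : a = s ∨ a = t) (hb : b = s ∨ b = t) : a = s ∧ b = t := by
  rcases ha with rfl | rfl <;> rcases hb with rfl | rfl <;> first | exact ⟨rfl, rfl⟩ | order

/-- `X̃` lies in rows `s < t` and columns `p < q` of the leading `m × m` block of `X`. -/
def TildeAt (X : Fin (m + 1) → Fin (m + 1) → Bool) (s t p q : Fin m) : Prop :=
  s < t ∧ p < q ∧ (∀ i, X i.castSucc (Fin.last m) = true ↔ i = s ∨ i = t) ∧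
    ∀ j, X (Fin.last m) j.castSucc = true ↔ j = p ∨ j = q

theorem exists_tildeAt {X : Fin (m + 1) → Fin (m + 1) → Bool} (hX : isLambda (m + 1) 3 X)
    (hlast : X (Fin.last m) (Fin.last m) = true) : ∃ s t p q, TildeAt X s t p q := by
  obtain ⟨s, t, hst, hcol⟩ := exists_castSucc_eq_true_iff (hX.2 (Fin.last m)) hlast
  obtain ⟨p, q, hpq, hrow⟩ := exists_castSucc_eq_true_iff (hX.1 (Fin.last m)) hlast
  exact ⟨s, t, p, q, hst, hpq, hcol, hrow⟩

theorem tildePattern_iff {X : Fin (m + 1) → Fin (m + 1) → Bool} {s t p q : Fin m}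
    (hT : TildeAt X s t p q) (h : 0 < m + 1) (P : Bool → Bool → Bool → Bool → Prop) :
    tildePattern (m + 1) h X P ↔
      P (X s.castSucc p.castSucc) (X s.castSucc q.castSucc)
        (X t.castSucc p.castSucc) (X t.castSucc q.castSucc) := by
  obtain ⟨hst, hpq, hcol, hrow⟩ := hT
  constructor
  · rintro ⟨s', t', p', q', hst', hpq', hs, ht, hp, hq, h1, h2, h3, h4, hP⟩
    obtain ⟨s', rfl⟩ := Fin.exists_castSucc_eq.mpr hs
    obtain ⟨t', rfl⟩ := Fin.exists_castSucc_eq.mpr ht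
    obtain ⟨p', rfl⟩ := Fin.exists_castSucc_eq.mpr hp
    obtain ⟨q', rfl⟩ := Fin.exists_castSucc_eq.mpr hq
    obtain ⟨rfl, rfl⟩ := pair_eq_of_lt (Fin.castSucc_lt_castSucc_iff.mp hst') hst
      ((hcol s').mp h1) ((hcol t').mp h2)
    obtain ⟨rfl, rfl⟩ := pair_eq_of_lt (Fin.castSucc_lt_castSucc_iff.mp hpq') hpq
      ((hrow p').mp h3) ((hrow q').mp h4)
    exact hP
  · intro hP
    exact ⟨_, _, _, _, Fin.castSucc_lt_castSucc_iff.mpr hst, Fin.castSucc_lt_castSucc_iff.mpr hpq,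
      Fin.castSucc_ne_last s, Fin.castSucc_ne_last t, Fin.castSucc_ne_last p,
      Fin.castSucc_ne_last q, (hcol s).mpr (.inl rfl), (hcol t).mpr (.inr rfl),
      (hrow p).mpr (.inl rfl), (hrow q).mpr (.inr rfl), hP⟩

theorem isLambda_swap {n k : ℕ} {X : Fin n → Fin n → Bool} :
    isLambda n k (Function.swap X) ↔ isLambda n k X :=
  and_comm

theorem tildePattern_swap {n : ℕ} (h : 0 < n) (X : Fin n → Fin n → Bool)
    (P : Bool → Bool → Bool → Bool → Prop) :
    tildePattern n h (Function.swap X) P ↔ tildePattern n h X fun a b c d => P a c b d := by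
  constructor <;>
  · rintro ⟨s, t, p, q, hst, hpq, hs, ht, hp, hq, h1, h2, h3, h4, hP⟩
    exact ⟨p, q, s, t, hpq, hst, hp, hq, hs, ht, h3, h4, h1, h2, hP⟩

theorem patΔ_iff_patΓ (a b c d : Bool) : patΔ a c b d ↔ patΓ a b c d := by
  unfold patΔ patΓ; tauto

theorem card_tildePattern_swap (k : ℕ) (h : 0 < m + 1)
    (P : Bool → Bool → Bool → Bool → Prop) [∀ a b c d, Decidable (P a b c d)] :
    #{X ∈ lamPosFinset m k | tildePattern (m + 1) h X fun a b c d => P a c b d} =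
      #{X ∈ lamPosFinset m k | tildePattern (m + 1) h X P} := by
  refine card_nbij' Function.swap Function.swap ?_ ?_ (fun _ _ => rfl) (fun _ _ => rfl) <;>
  · intro X hX
    simp only [lamPosFinset, coe_filter, mem_filter, mem_univ, true_and, Set.mem_ofPred_eq,
      isLambda_swap, tildePattern_swap] at hX ⊢
    exact hX

theorem card_patΓ_eq_card_patΔ (k : ℕ) (h : 0 < m + 1) :
    #{X ∈ lamPosFinset m k | tildePattern (m + 1) h X patΓ} =
      #{X ∈ lamPosFinset m k | tildePattern (m + 1) h X patΔ} := by
  convert card_tildePattern_swap k h patΔ using 8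
  exact (patΔ_iff_patΓ _ _ _ _).symm

def ones (Y : Fin m → Fin m → Bool) : Finset (Fin m × Fin m) := {e | Y e.1 e.2 = true}

theorem mem_ones {Y : Fin m → Fin m → Bool} {e : Fin m × Fin m} :
    e ∈ ones Y ↔ Y e.1 e.2 = true := by
  simp [ones]

def nonAttackingPairs (Y : Fin m → Fin m → Bool) :
    Finset ((Fin m × Fin m) × (Fin m × Fin m)) :=
  {ee ∈ ones Y ×ˢ ones Y | ee.1.1 ≠ ee.2.1 ∧ ee.1.2 ≠ ee.2.2}

theorem card_ones {k : ℕ} {Y : Fin m → Fin m → Bool} (hY : isLambda m k Y) :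
    #(ones Y) = m * k := by
  rw [ones, card_filter, Fintype.sum_prod_type]
  simp only [← card_filter, hY.1, sum_const, card_univ, Fintype.card_fin, smul_eq_mul]

theorem filter_ones_fst_eq (Y : Fin m → Fin m → Bool) (i : Fin m) :
    ({e ∈ ones Y | e.1 = i} : Finset (Fin m × Fin m)) =
      ({i} : Finset (Fin m)) ×ˢ ({j | Y i j = true} : Finset (Fin m)) := by
  ext ⟨a, b⟩
  simp only [mem_filter, mem_ones, mem_univ, true_and, mem_product, mem_singleton]
  constructor
  · rintro ⟨hY, rfl⟩; exact ⟨rfl, hY⟩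
  · rintro ⟨rfl, hY⟩; exact ⟨hY, rfl⟩

theorem filter_ones_snd_eq (Y : Fin m → Fin m → Bool) (j : Fin m) :
    ({e ∈ ones Y | e.2 = j} : Finset (Fin m × Fin m)) =
      ({i | Y i j = true} : Finset (Fin m)) ×ˢ ({j} : Finset (Fin m)) := by
  ext ⟨a, b⟩
  simp only [mem_filter, mem_ones, mem_univ, true_and, mem_product, mem_singleton]
  constructor
  · rintro ⟨hY, rfl⟩; exact ⟨hY, rfl⟩
  · rintro ⟨hY, rfl⟩; exact ⟨hY, rfl⟩

theorem card_nonAttacking_partners_add {k : ℕ} {Y : Fin m → Fin m → Bool}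
    (hY : isLambda m k Y) {e : Fin m × Fin m} (he : e ∈ ones Y) :
    #{e' ∈ ones Y | e.1 ≠ e'.1 ∧ e.2 ≠ e'.2} + (2 * k - 1) = m * k := by
  have hline : #{e' ∈ ones Y | e'.1 = e.1 ∨ e'.2 = e.2} = 2 * k - 1 := by
    have hinter : {e' ∈ ones Y | e'.1 = e.1} ∩ {e' ∈ ones Y | e'.2 = e.2} = {e} := by
      ext e'
      simp only [mem_inter, mem_filter, mem_singleton, Prod.ext_iff]
      constructor
      · rintro ⟨⟨-, h1⟩, -, h2⟩; exact ⟨h1, h2⟩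
      · rintro ⟨h1, h2⟩; exact ⟨⟨Prod.ext h1 h2 ▸ he, h1⟩, Prod.ext h1 h2 ▸ he, h2⟩
    have hunion :=
      card_union_add_card_inter {e' ∈ ones Y | e'.1 = e.1} {e' ∈ ones Y | e'.2 = e.2}
    rw [hinter, ← filter_or, filter_ones_fst_eq, filter_ones_snd_eq] at hunion
    simp only [card_product, card_singleton, hY.1, hY.2, one_mul, mul_one] at hunion
    omega
  rw [← card_ones hY, ← card_filter_add_card_filter_not (s := ones Y)
    (fun e' => e'.1 = e.1 ∨ e'.2 = e.2), hline, add_comm]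
  congr 3
  ext e'
  simp only [not_or, ne_comm]

theorem card_nonAttackingPairs {Y : Fin m → Fin m → Bool} (hY : isLambda m 3 Y) :
    (#(nonAttackingPairs Y) : ℤ) = 3 * m * (3 * m - 5) := by
  have hpartners :
      ∀ e ∈ ones Y, (#{e' ∈ ones Y | e.1 ≠ e'.1 ∧ e.2 ≠ e'.2} : ℤ) = 3 * m - 5 := by
    intro e he
    have := card_nonAttacking_partners_add hY he
    omega
  rw [nonAttackingPairs, card_filter, sum_product]
  simp only [← card_filter]
  rw [Nat.cast_sum, sum_congr rfl hpartners, sum_const, card_ones hY, nsmul_eq_mul]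
  push_cast
  ring

/-- Moves the ones of `Y` at `e` and `e'` to a new last column (rows `e.1`, `e'.1`) and a new
last row (columns `e.2`, `e'.2`), with a one in the new corner. -/
def extend (Y : Fin m → Fin m → Bool) (e e' : Fin m × Fin m) :
    Fin (m + 1) → Fin (m + 1) → Bool :=
  Fin.lastCases (Fin.lastCases true fun j => decide (j = e.2 ∨ j = e'.2))
    fun i => Fin.lastCases (decide (i = e.1 ∨ i = e'.1))
      fun j => Y i j && !decide ((i, j) = e ∨ (i, j) = e')

def contract (X : Fin (m + 1) → Fin (m + 1) → Bool) (e e' : Fin m × Fin m) :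
    Fin m → Fin m → Bool :=
  fun i j => X i.castSucc j.castSucc || decide ((i, j) = e ∨ (i, j) = e')

section extend

variable (Y : Fin m → Fin m → Bool) (e e' : Fin m × Fin m)

@[simp] theorem extend_last_last : extend Y e e' (Fin.last m) (Fin.last m) = true := by
  simp [extend]

@[simp] theorem extend_last_castSucc (j : Fin m) :
    extend Y e e' (Fin.last m) j.castSucc = decide (j = e.2 ∨ j = e'.2) := by
  simp [extend]

@[simp] theorem extend_castSucc_last (i : Fin m) :
    extend Y e e' i.castSucc (Fin.last m) = decide (i = e.1 ∨ i = e'.1) := by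
  simp [extend]

@[simp] theorem extend_castSucc_castSucc (i j : Fin m) :
    extend Y e e' i.castSucc j.castSucc = (Y i j && !decide ((i, j) = e ∨ (i, j) = e')) := by
  simp [extend]

theorem extend_swap :
    extend (Function.swap Y) e.swap e'.swap = Function.swap (extend Y e e') := by
  funext i j
  induction i using Fin.lastCases <;> induction j using Fin.lastCases <;>
    simp [Function.swap, Prod.ext_iff, and_comm]

end extend

theorem contract_swap (X : Fin (m + 1) → Fin (m + 1) → Bool) (e e' : Fin m × Fin m) :
    contract (Function.swap X) e.swap e'.swap = Function.swap (contract X e e') := by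
  funext i j
  simp [contract, Function.swap, Prod.ext_iff, and_comm]

theorem sum_toNat_mem_pair {e e' : Fin m × Fin m} (h : e.1 ≠ e'.1) (i : Fin m) :
    ∑ j, (decide ((i, j) = e ∨ (i, j) = e')).toNat = (decide (i = e.1 ∨ i = e'.1)).toNat := by
  by_cases h1 : i = e.1
  · subst h1
    simp [Prod.ext_iff, h, Bool.toNat, Bool.cond_decide]
  · by_cases h2 : i = e'.1
    · subst h2
      simp [Prod.ext_iff, h1, Bool.toNat, Bool.cond_decide]
    · simp [Prod.ext_iff, h1, h2]

theorem card_row_extend {Y : Fin m → Fin m → Bool} {e e' : Fin m × Fin m}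
    (hrow : ∀ i, #{j | Y i j = true} = 3) (he : Y e.1 e.2 = true) (he' : Y e'.1 e'.2 = true)
    (h1 : e.1 ≠ e'.1) (h2 : e.2 ≠ e'.2) (i : Fin (m + 1)) :
    #{j | extend Y e e' i j = true} = 3 := by
  induction i using Fin.lastCases with
  | last =>
    rw [card_filter_fin_succ]
    have hpair : ({j | extend Y e e' (Fin.last m) j.castSucc = true} : Finset (Fin m)) =
        {e.2, e'.2} := by
      ext j; simp
    rw [hpair, card_pair h2, extend_last_last]
    rfl
  | cast i =>
    have hmoved : ∀ j, (Y i j && !decide ((i, j) = e ∨ (i, j) = e')).toNat +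
        (decide ((i, j) = e ∨ (i, j) = e')).toNat = (Y i j).toNat := by
      intro j
      by_cases hc : (i, j) = e ∨ (i, j) = e'
      · have hY : Y i j = true := by rcases hc with rfl | rfl <;> assumption
        simp [hc, hY]
      · simp [hc]
    rw [card_filter_fin_succ, extend_castSucc_last, ← hrow i, ← sum_toNat_mem_pair h1 i]
    simp only [card_filter_eq_sum_toNat, extend_castSucc_castSucc, ← sum_add_distrib, hmoved]

theorem card_row_contract {k : ℕ} {X : Fin (m + 1) → Fin (m + 1) → Bool}
    {e e' : Fin m × Fin m}
    (hrow : ∀ i, #{j | X i j = true} = k)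
    (hlast : ∀ i, X i.castSucc (Fin.last m) = true ↔ i = e.1 ∨ i = e'.1)
    (he : X e.1.castSucc e.2.castSucc = false) (he' : X e'.1.castSucc e'.2.castSucc = false)
    (h1 : e.1 ≠ e'.1) (i : Fin m) :
    #{j | contract X e e' i j = true} = k := by
  have hmoved : ∀ j, (contract X e e' i j).toNat = (X i.castSucc j.castSucc).toNat +
      (decide ((i, j) = e ∨ (i, j) = e')).toNat := by
    intro j
    by_cases hc : (i, j) = e ∨ (i, j) = e'
    · have hX : X i.castSucc j.castSucc = false := by rcases hc with rfl | rfl <;> assumption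
      simp [contract, hc, hX]
    · simp [contract, hc]
  have hcorner : X i.castSucc (Fin.last m) = decide (i = e.1 ∨ i = e'.1) :=
    Bool.eq_iff_iff.mpr (by simpa using hlast i)
  rw [← hrow i.castSucc, card_filter_fin_succ, hcorner, ← sum_toNat_mem_pair h1 i]
  simp only [card_filter_eq_sum_toNat, hmoved, sum_add_distrib]

/-- The pairs `(e, e')` along which `X` is the `extend` of an `m × m` matrix. -/
def contractionPairs (X : Fin (m + 1) → Fin (m + 1) → Bool) :
    Finset ((Fin m × Fin m) × (Fin m × Fin m)) :=
  {ee | ee.1.1 ≠ ee.2.1 ∧ ee.1.2 ≠ ee.2.2 ∧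
    X ee.1.1.castSucc (Fin.last m) = true ∧ X ee.2.1.castSucc (Fin.last m) = true ∧
    X (Fin.last m) ee.1.2.castSucc = true ∧ X (Fin.last m) ee.2.2.castSucc = true ∧
    X ee.1.1.castSucc ee.1.2.castSucc = false ∧ X ee.2.1.castSucc ee.2.2.castSucc = false}

theorem isLambda_extend {Y : Fin m → Fin m → Bool} {e e' : Fin m × Fin m}
    (hY : isLambda m 3 Y) (hee : (e, e') ∈ nonAttackingPairs Y) :
    isLambda (m + 1) 3 (extend Y e e') := by
  simp only [nonAttackingPairs, mem_filter, mem_product, mem_ones] at hee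
  obtain ⟨⟨he, he'⟩, h1, h2⟩ := hee
  refine ⟨card_row_extend hY.1 he he' h1 h2, fun j => ?_⟩
  have := card_row_extend (Y := Function.swap Y) (e := e.swap) (e' := e'.swap) hY.2 he he' h2 h1 j
  rwa [extend_swap] at this

theorem extend_mem {Y : Fin m → Fin m → Bool} {e e' : Fin m × Fin m}
    (hY : isLambda m 3 Y) (hee : (e, e') ∈ nonAttackingPairs Y) :
    extend Y e e' ∈ lamPosFinset m 3 ∧ (e, e') ∈ contractionPairs (extend Y e e') := by
  refine ⟨by simp [lamPosFinset, isLambda_extend hY hee], ?_⟩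
  simp only [nonAttackingPairs, mem_filter, mem_product, mem_ones] at hee
  simp [contractionPairs, hee.2.1, hee.2.2]

theorem contract_extend {Y : Fin m → Fin m → Bool} {e e' : Fin m × Fin m}
    (he : Y e.1 e.2 = true) (he' : Y e'.1 e'.2 = true) : contract (extend Y e e') e e' = Y := by
  funext i j
  by_cases hc : (i, j) = e ∨ (i, j) = e'
  · have hY : Y i j = true := by rcases hc with rfl | rfl <;> assumption
    simp [contract, hc, hY]
  · simp [contract, hc]

theorem lastLines_of_mem_contractionPairs {X : Fin (m + 1) → Fin (m + 1) → Bool}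
    {e e' : Fin m × Fin m} (hX : X ∈ lamPosFinset m 3) (hee : (e, e') ∈ contractionPairs X) :
    (∀ i, X i.castSucc (Fin.last m) = true ↔ i = e.1 ∨ i = e'.1) ∧
      ∀ j, X (Fin.last m) j.castSucc = true ↔ j = e.2 ∨ j = e'.2 := by
  simp only [lamPosFinset, contractionPairs, mem_filter, mem_univ, true_and] at hX hee
  obtain ⟨h1, h2, hc, hc', hr, hr', -⟩ := hee
  exact ⟨castSucc_eq_true_iff (hX.1.2 _) hX.2 hc hc' h1,
    castSucc_eq_true_iff (hX.1.1 _) hX.2 hr hr' h2⟩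

theorem isLambda_contract {X : Fin (m + 1) → Fin (m + 1) → Bool} {e e' : Fin m × Fin m}
    (hX : X ∈ lamPosFinset m 3) (hee : (e, e') ∈ contractionPairs X) :
    isLambda m 3 (contract X e e') := by
  obtain ⟨hcol, hrow⟩ := lastLines_of_mem_contractionPairs hX hee
  simp only [lamPosFinset, contractionPairs, mem_filter, mem_univ, true_and] at hX hee
  obtain ⟨h1, h2, -, -, -, -, he, he'⟩ := hee
  refine ⟨card_row_contract hX.1.1 hcol he he' h1, fun j => ?_⟩
  have := card_row_contract (X := Function.swap X) (e := e.swap) (e' := e'.swap) hX.1.2 hrow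
    he he' h2 j
  rwa [contract_swap] at this

theorem contract_mem {X : Fin (m + 1) → Fin (m + 1) → Bool} {e e' : Fin m × Fin m}
    (hX : X ∈ lamPosFinset m 3) (hee : (e, e') ∈ contractionPairs X) :
    contract X e e' ∈ lamFinset m 3 ∧ (e, e') ∈ nonAttackingPairs (contract X e e') := by
  refine ⟨by simp [lamFinset, isLambda_contract hX hee], ?_⟩
  simp only [contractionPairs, mem_filter, mem_univ, true_and] at hee
  simp [nonAttackingPairs, mem_ones, contract, hee.1, hee.2.1]

theorem extend_contract {X : Fin (m + 1) → Fin (m + 1) → Bool} {e e' : Fin m × Fin m}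
    (hX : X ∈ lamPosFinset m 3) (hee : (e, e') ∈ contractionPairs X) :
    extend (contract X e e') e e' = X := by
  obtain ⟨hcol, hrow⟩ := lastLines_of_mem_contractionPairs hX hee
  simp only [lamPosFinset, contractionPairs, mem_filter, mem_univ, true_and] at hX hee
  obtain ⟨-, -, -, -, -, -, he, he'⟩ := hee
  funext i j
  induction i using Fin.lastCases <;> induction j using Fin.lastCases
  · simp [hX.2]
  · simp only [extend_last_castSucc, ← hrow, Bool.decide_eq_true]
  · simp only [extend_castSucc_last, ← hcol, Bool.decide_eq_true]
  · rename_i i j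
    by_cases hc : (i, j) = e ∨ (i, j) = e'
    · have hXij : X i.castSucc j.castSucc = false := by rcases hc with rfl | rfl <;> assumption
      simp [contract, hc, hXij]
    · simp [contract, hc]

theorem card_sigma_contractionPairs (m : ℕ) :
    #((lamPosFinset m 3).sigma contractionPairs) =
      #((lamFinset m 3).sigma nonAttackingPairs) := by
  refine card_nbij' (fun z => ⟨contract z.1 z.2.1 z.2.2, z.2⟩)
    (fun z => ⟨extend z.1 z.2.1 z.2.2, z.2⟩) ?_ ?_ ?_ ?_
  · rintro ⟨X, e, e'⟩ hz
    simp only [coe_sigma, Set.mem_sigma_iff, mem_coe] at hz ⊢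
    exact contract_mem hz.1 hz.2
  · rintro ⟨Y, e, e'⟩ hz
    simp only [coe_sigma, Set.mem_sigma_iff, mem_coe, lamFinset, mem_filter, mem_univ,
      true_and] at hz ⊢
    exact extend_mem hz.1 hz.2
  · rintro ⟨X, e, e'⟩ hz
    simp only [coe_sigma, Set.mem_sigma_iff, mem_coe] at hz
    simp only [extend_contract hz.1 hz.2]
  · rintro ⟨Y, e, e'⟩ hz
    simp only [coe_sigma, Set.mem_sigma_iff, mem_coe, nonAttackingPairs, mem_filter, mem_product,
      mem_ones] at hz
    simp only [contract_extend hz.2.1.1 hz.2.1.2]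

theorem sum_card_contractionPairs (m : ℕ) :
    (∑ X ∈ lamPosFinset m 3, #(contractionPairs X) : ℤ) =
      lam m 3 * (3 * m * (3 * m - 5)) := by
  have hY : ∀ Y ∈ lamFinset m 3, (#(nonAttackingPairs Y) : ℤ) = 3 * m * (3 * m - 5) :=
    fun Y hY => card_nonAttackingPairs (by simpa [lamFinset] using hY)
  rw [← Nat.cast_sum, ← card_sigma, card_sigma_contractionPairs, card_sigma, Nat.cast_sum,
    sum_congr rfl hY, sum_const, nsmul_eq_mul, lam_eq_card]

def zeroDiagonals (a b c d : Bool) : ℕ := (!a && !d).toNat + (!b && !c).toNat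

theorem contractionPairs_eq {X : Fin (m + 1) → Fin (m + 1) → Bool} {s t p q : Fin m}
    (hT : TildeAt X s t p q) :
    contractionPairs X =
      {ee ∈ ({((s, p), (t, q)), ((t, q), (s, p)), ((s, q), (t, p)), ((t, p), (s, q))} :
          Finset ((Fin m × Fin m) × (Fin m × Fin m))) |
        X ee.1.1.castSucc ee.1.2.castSucc = false ∧
          X ee.2.1.castSucc ee.2.2.castSucc = false} := by
  obtain ⟨hst, hpq, hcol, hrow⟩ := hT
  ext ⟨⟨a, b⟩, c, d⟩
  simp only [contractionPairs, mem_filter, mem_univ, true_and, hcol, hrow, mem_insert,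
    mem_singleton, Prod.mk.injEq]
  constructor
  · rintro ⟨hac, hbd, ha, hc, hb, hd, hX⟩
    refine ⟨?_, hX⟩
    rcases ha with rfl | rfl <;> rcases hc with rfl | rfl <;> rcases hb with rfl | rfl <;>
      rcases hd with rfl | rfl <;> simp_all
  · rintro ⟨h | h | h | h, hX⟩ <;> obtain ⟨⟨rfl, rfl⟩, rfl, rfl⟩ := h <;>
      simp [hX, hst.ne, hst.ne', hpq.ne, hpq.ne']

theorem card_contractionPairs {X : Fin (m + 1) → Fin (m + 1) → Bool} {s t p q : Fin m}
    (hT : TildeAt X s t p q) :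
    #(contractionPairs X) = 2 * zeroDiagonals (X s.castSucc p.castSucc) (X s.castSucc q.castSucc)
      (X t.castSucc p.castSucc) (X t.castSucc q.castSucc) := by
  have hst := hT.1.ne
  have hpq := hT.2.1.ne
  rw [contractionPairs_eq hT, card_filter, sum_insert, sum_insert, sum_insert, sum_singleton]
  · cases X s.castSucc p.castSucc <;> cases X s.castSucc q.castSucc <;>
      cases X t.castSucc p.castSucc <;> cases X t.castSucc q.castSucc <;> rfl
  all_goals simp [hst, hst.symm, hpq, hpq.symm]

theorem one_add_patH_eq (a b c d : Bool) :
    1 + (if patH a b c d then 1 else 0) =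
      (if patA a b c d then 1 else 0) + (if patB a b c d then 1 else 0) +
        (if patΓ a b c d then 1 else 0) + (if patΔ a b c d then 1 else 0) +
          zeroDiagonals a b c d := by
  revert a b c d; decide

theorem two_mul_card_add_card_patH (h : 0 < m + 1) :
    2 * (#(lamPosFinset m 3) + #{X ∈ lamPosFinset m 3 | tildePattern (m + 1) h X patH}) =
      2 * (#{X ∈ lamPosFinset m 3 | tildePattern (m + 1) h X patA} +
        #{X ∈ lamPosFinset m 3 | tildePattern (m + 1) h X patB} +
        #{X ∈ lamPosFinset m 3 | tildePattern (m + 1) h X patΓ} +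
        #{X ∈ lamPosFinset m 3 | tildePattern (m + 1) h X patΔ}) +
      ∑ X ∈ lamPosFinset m 3, #(contractionPairs X) := by
  have hX : ∀ X ∈ lamPosFinset m 3,
      2 * (1 + if tildePattern (m + 1) h X patH then 1 else 0) =
        2 * ((if tildePattern (m + 1) h X patA then 1 else 0) +
          (if tildePattern (m + 1) h X patB then 1 else 0) +
          (if tildePattern (m + 1) h X patΓ then 1 else 0) +
          (if tildePattern (m + 1) h X patΔ then 1 else 0)) + #(contractionPairs X) := by
    intro X hX
    simp only [lamPosFinset, mem_filter, mem_univ, true_and] at hX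
    obtain ⟨s, t, p, q, hT⟩ := exists_tildeAt hX.1 hX.2
    simp only [tildePattern_iff hT, card_contractionPairs hT, one_add_patH_eq]
    ring
  simpa only [← mul_sum, sum_add_distrib, ← card_filter, sum_const, smul_eq_mul, mul_one] using
    sum_congr rfl hX

end Lam

theorem lamPos_three_rec_general (n : ℕ) (h : 0 < n) :
    let α : ℕ := {X : Fin n → Fin n → Bool |
      isLambda n 3 X ∧ X (lastIdx n h) (lastIdx n h) = true ∧ tildePattern n h X patA}.ncard
    let β : ℕ := {X : Fin n → Fin n → Bool |
      isLambda n 3 X ∧ X (lastIdx n h) (lastIdx n h) = true ∧ tildePattern n h X patB}.ncard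
    let γ : ℕ := {X : Fin n → Fin n → Bool |
      isLambda n 3 X ∧ X (lastIdx n h) (lastIdx n h) = true ∧ tildePattern n h X patΓ}.ncard
    let η : ℕ := {X : Fin n → Fin n → Bool |
      isLambda n 3 X ∧ X (lastIdx n h) (lastIdx n h) = true ∧ tildePattern n h X patH}.ncard
    2 * (lamPos n 3 h : ℤ) =
      3 * ((n : ℤ) - 1) * (3 * (n : ℤ) - 8) * (lam (n - 1) 3 : ℤ) +
        2 * ((α : ℤ) + (β : ℤ) + 2 * (γ : ℤ) - (η : ℤ)) := by
  obtain ⟨m, rfl⟩ : ∃ m, n = m + 1 := ⟨n - 1, by omega⟩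
  simp only [Lam.ncard_tildePattern_eq_card, Lam.lamPos_eq_card, Nat.add_sub_cancel]
  have hclasses := Lam.two_mul_card_add_card_patH h
  have hΓΔ := Lam.card_patΓ_eq_card_patΔ 3 h
  have hpairs := Lam.sum_card_contractionPairs m
  zify at hclasses hΓΔ
  push_cast
  linear_combination hclasses - 2 * hΓΔ + hpairs

/-- 2·λ⁺_{n,3} = 3(n−1)(3n−8)·λ_{n−1,3} + 2(αₙ + βₙ + 2γₙ − ηₙ), stated in ℤ. -/
theorem lamPos_three_rec (n : ℕ) (hn : 4 ≤ n) (h : 0 < n) :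
    let α : ℕ := {X : Fin n → Fin n → Bool |
      isLambda n 3 X ∧ X (lastIdx n h) (lastIdx n h) = true ∧ tildePattern n h X patA}.ncard
    let β : ℕ := {X : Fin n → Fin n → Bool |
      isLambda n 3 X ∧ X (lastIdx n h) (lastIdx n h) = true ∧ tildePattern n h X patB}.ncard
    let γ : ℕ := {X : Fin n → Fin n → Bool |
      isLambda n 3 X ∧ X (lastIdx n h) (lastIdx n h) = true ∧ tildePattern n h X patΓ}.ncard
    let η : ℕ := {X : Fin n → Fin n → Bool |
      isLambda n 3 X ∧ X (lastIdx n h) (lastIdx n h) = true ∧ tildePattern n h X patH}.ncard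
    2 * (lamPos n 3 h : ℤ) =
      3 * ((n : ℤ) - 1) * (3 * (n : ℤ) - 8) * (lam (n - 1) 3 : ℤ) +
        2 * ((α : ℤ) + (β : ℤ) + 2 * (γ : ℤ) - (η : ℤ)) :=
  lamPos_three_rec_general n h
end
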